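/- arXiv:2010.01473 — 2 statements merged into one kernel-verified Lean document; each statement's English description precedes it below -/
import Mathlib

section
/- For every point W in the parameter space ℝⁿ of a finite ReLU neural network, except on a set of Lebesgue measure zero, there exists an open neighborhood of W on which every pre-activation value of the network (at a fixed input) keeps a constant sign (either ≥ 0 throughout or ≤ 0 throughout the neighborhood); consequently on this neighborhood each ReLU acts as a fixed binary mask (multiplication by 0 or 1). -/
/-!
A nonzero real polynomial in `n` variables vanishes only on a Lebesgue-null set: write it as a
polynomial in the first variable whose coefficients are polynomials in the remaining ones; off the
null zero set of the leading coefficient (induction) each one-variable section has finitely many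
roots, so Fubini applies. Outside the union of the zero sets of all pieces, every pre-activation is
nonzero at `W`, since it agrees with some piece there, and by continuity keeps its strict sign on
a neighbourhood, where the ReLU is then the identity or zero.
-/

open MeasureTheory Filter Topology

theorem Polynomial.ae_eval_ne_zero {μ : Measure ℝ} [NullSingletonClass μ] {p : Polynomial ℝ}
    (hp : p ≠ 0) :
    ∀ᵐ y ∂μ, p.eval y ≠ 0 :=
  measure_eq_zero_iff_ae_notMem.1 ((Polynomial.finite_setOfPred_isRoot hp).measure_zero μ)

theorem MvPolynomial.ae_eval_ne_zero {n : ℕ} {q : MvPolynomial (Fin n) ℝ} (hq : q ≠ 0) :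
    ∀ᵐ x : Fin n → ℝ, MvPolynomial.eval x q ≠ 0 := by
  induction n with
  | zero =>
    obtain ⟨a, rfl⟩ := MvPolynomial.C_surjective (Fin 0) q
    exact ae_of_all _ fun x => by simpa using hq
  | succ n ih =>
    set Q := MvPolynomial.finSuccEquiv ℝ n q
    have hQ : Q ≠ 0 := (map_ne_zero_iff _ (MvPolynomial.finSuccEquiv ℝ n).injective).2 hq
    have hsection : ∀ᵐ s : Fin n → ℝ, ∀ᵐ y : ℝ, MvPolynomial.eval (Fin.cons y s) q ≠ 0 := by
      filter_upwards [ih (Polynomial.leadingCoeff_ne_zero.2 hQ)] with s hs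
      have hQs : Q.map (MvPolynomial.eval s) ≠ 0 := fun h => hs <| by
        simpa using congr_arg (Polynomial.coeff · Q.natDegree) h
      simpa only [MvPolynomial.eval_eq_eval_mv_eval'] using Polynomial.ae_eval_ne_zero hQs
    have hmeas : MeasurableSet
        {x : ℝ × (Fin n → ℝ) | MvPolynomial.eval (Fin.cons x.1 x.2 : Fin (n + 1) → ℝ) q ≠ 0} :=
      (isOpen_ne_fun ((MvPolynomial.continuous_eval q).comp
        (continuous_fst.finCons continuous_snd)) continuous_const).measurableSet
    have hprod := (Measure.ae_prod_iff_ae_ae hmeas).2 ((Measure.ae_ae_comm hmeas).2 hsection)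
    rw [← Measure.volume_eq_prod] at hprod
    have hsplit := volume_preserving_piFinSuccAbove (fun _ : Fin (n + 1) => ℝ) 0
    simpa [MeasurableEquiv.piFinSuccAbove] using hsplit.quasiMeasurePreserving.ae hprod

theorem exists_isOpen_forall_pos_or_forall_neg {X ι : Type*} [TopologicalSpace X] [Finite ι]
    {F : ι → X → ℝ} (hF : ∀ j, Continuous (F j)) {x : X} (hx : ∀ j, F j x ≠ 0) :
    ∃ U ∈ 𝓝 x, IsOpen U ∧ ∀ j, (∀ w ∈ U, 0 < F j w) ∨ (∀ w ∈ U, F j w < 0) := by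
  have hsame : ∀ j, ∀ᶠ w in 𝓝 x, 0 < F j w * F j x := fun j =>
    continuousAt_const.eventually_lt ((hF j).mul continuous_const).continuousAt
      (mul_self_pos.2 (hx j))
  obtain ⟨U, hU, hUo, hxU⟩ := eventually_nhds_iff.1 (eventually_all.2 hsame)
  refine ⟨U, hUo.mem_nhds hxU, hUo, fun j => ?_⟩
  rcases (hx j).lt_or_gt with hneg | hpos
  · exact .inr fun w hw => (neg_iff_neg_of_mul_pos (hU w hw j)).2 hneg
  · exact .inl fun w hw => (pos_iff_pos_of_mul_pos (hU w hw j)).2 hpos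

theorem exists_max_zero_eq_mask_mul {X : Type*} {f : X → ℝ} {U : Set X}
    (h : (∀ w ∈ U, 0 ≤ f w) ∨ (∀ w ∈ U, f w ≤ 0)) :
    ∃ c : ℝ, (c = 0 ∨ c = 1) ∧ ∀ w ∈ U, max (f w) 0 = c * f w := by
  rcases h with hnonneg | hnonpos
  · exact ⟨1, .inr rfl, fun w hw => by rw [max_eq_left (hnonneg w hw), one_mul]⟩
  · exact ⟨0, .inl rfl, fun w hw => by rw [max_eq_right (hnonpos w hw), zero_mul]⟩

/-- For a finite ReLU network, whose pre-activations `F j` (at a fixed input)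
are continuous piecewise-polynomial functions of the parameter vector `W ∈ ℝⁿ` (the pieces
being finitely many nonzero polynomials, one per binary ReLU configuration), there is a
Lebesgue measure-zero set outside of which every parameter `W` has an open neighborhood on
which each pre-activation keeps a constant sign; consequently each ReLU acts there as a
fixed binary mask (multiplication by 0 or 1). -/
theorem relu_network_locally_fixed_mask_ae
    (n m K : ℕ) (F : Fin m → (Fin n → ℝ) → ℝ)
    (hcont : ∀ j, Continuous (F j))
    (p : Fin m → Fin K → MvPolynomial (Fin n) ℝ)
    (hp : ∀ j i, p j i ≠ 0)
    (hpiece : ∀ j (W : Fin n → ℝ), ∃ i, F j W = MvPolynomial.eval W (p j i)) :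
    ∃ S : Set (Fin n → ℝ), volume S = 0 ∧
      ∀ W ∉ S, ∃ U ∈ nhds W, IsOpen U ∧
        (∀ j, (∀ w ∈ U, 0 ≤ F j w) ∨ (∀ w ∈ U, F j w ≤ 0)) ∧
        (∀ j, ∃ c : ℝ, (c = 0 ∨ c = 1) ∧ ∀ w ∈ U, max (F j w) 0 = c * F j w) := by
  have hgeneric : ∀ᵐ W : Fin n → ℝ, ∀ j i, MvPolynomial.eval W (p j i) ≠ 0 :=
    ae_all_iff.2 fun j => ae_all_iff.2 fun i => MvPolynomial.ae_eval_ne_zero (hp j i)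
  refine ⟨_, ae_iff.1 hgeneric, fun W hW => ?_⟩
  have hF : ∀ j, F j W ≠ 0 := fun j => by
    obtain ⟨i, hi⟩ := hpiece j W
    exact hi ▸ not_not.1 hW j i
  obtain ⟨U, hWU, hU, hsign⟩ := exists_isOpen_forall_pos_or_forall_neg hcont hF
  have hweak : ∀ j, (∀ w ∈ U, 0 ≤ F j w) ∨ (∀ w ∈ U, F j w ≤ 0) := fun j =>
    (hsign j).imp (fun h w hw => (h w hw).le) (fun h w hw => (h w hw).le)
  exact ⟨U, hWU, hU, hweak, fun j => exists_max_zero_eq_mask_mul (hweak j)⟩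
end

section
/- Fix an integer k ≥ 2. The function d ↦ sin²(πk/d)/(k² sin²(π/d)) is strictly increasing in d for integer (or real) d ≥ 2k, and tends to 1 as d → ∞. -/
/-!
With `x = π / d` the quantity is `g(x)²`, where `g(x) = sin(k x) / (k sin x)`, and `d ≥ k`
corresponds to `0 < x ≤ π / k`, where `g ≥ 0`. The numerator of `g'` is `k · N(x)` with
`N(x) = k cos(k x) sin x - cos x sin(k x)`; `N(0) = 0` and `N' = (1 - k²) sin(k x) sin x < 0` on
`(0, π / k)`, so `g` is strictly decreasing there and `g(π / d)²` is strictly increasing in `d`.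
For the limit, `g(x) = sinc(k x) / sinc x → 1` as `x → 0`.
-/

open Real Filter Set Topology

namespace Real

noncomputable def sinRatio (c x : ℝ) : ℝ := sin (c * x) / (c * sin x)

lemma sinRatio_eq_sinc_div_sinc {c x : ℝ} (hc : c ≠ 0) (hx : x ≠ 0) :
    sinRatio c x = sinc (c * x) / sinc x := by
  rw [sinRatio, sinc_of_ne_zero (mul_ne_zero hc hx), sinc_of_ne_zero hx]
  field_simp

lemma tendsto_sinRatio_nhdsNE_zero {c : ℝ} (hc : c ≠ 0) :
    Tendsto (sinRatio c) (𝓝[≠] 0) (𝓝 1) := by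
  have hnum : Tendsto (fun x => sinc (c * x)) (𝓝 0) (𝓝 1) := by
    simpa [Function.comp_def] using (continuous_sinc.comp (continuous_const_mul c)).tendsto 0
  have hden : Tendsto sinc (𝓝 0) (𝓝 1) := by
    simpa using continuous_sinc.tendsto 0
  refine ((div_one (1 : ℝ)) ▸ (hnum.div hden one_ne_zero)).mono_left nhdsWithin_le_nhds
    |>.congr' ?_
  filter_upwards [self_mem_nhdsWithin] with x hx
  exact (sinRatio_eq_sinc_div_sinc hc hx).symm

lemma hasDerivAt_mul_cos_mul_mul_sin_sub_cos_mul_sin_mul (c y : ℝ) :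
    HasDerivAt (fun y => c * cos (c * y) * sin y - cos y * sin (c * y))
      ((1 - c ^ 2) * sin (c * y) * sin y) y := by
  have hcos := ((hasDerivAt_id y).const_mul c).cos
  have hsin := ((hasDerivAt_id y).const_mul c).sin
  refine (((hcos.const_mul c).mul (hasDerivAt_sin y)).sub
    ((hasDerivAt_cos y).mul hsin)).congr_deriv ?_
  simp only [id]
  ring

lemma sin_pos_of_pos_of_le_pi_div {c x : ℝ} (hc : 1 < c) (hx₀ : 0 < x) (hx : x ≤ π / c) :
    0 < sin x :=
  sin_pos_of_pos_of_lt_pi hx₀ (hx.trans_lt (div_lt_self pi_pos hc))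

lemma mul_cos_mul_mul_sin_sub_cos_mul_sin_mul_neg {c x : ℝ} (hc : 1 < c) (hx₀ : 0 < x)
    (hx : x ≤ π / c) : c * cos (c * x) * sin x - cos x * sin (c * x) < 0 := by
  have hc₀ : 0 < c := one_pos.trans hc
  have hanti : StrictAntiOn (fun y => c * cos (c * y) * sin y - cos y * sin (c * y))
      (Icc 0 (π / c)) := by
    refine strictAntiOn_of_deriv_neg (convex_Icc _ _) (by fun_prop) fun y hy => ?_
    rw [interior_Icc] at hy
    rw [(hasDerivAt_mul_cos_mul_mul_sin_sub_cos_mul_sin_mul c y).deriv]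
    have hcy : 0 < sin (c * y) :=
      sin_pos_of_pos_of_lt_pi (mul_pos hc₀ hy.1) ((lt_div_iff₀' hc₀).1 hy.2)
    have hsy : 0 < sin y := sin_pos_of_pos_of_le_pi_div hc hy.1 hy.2.le
    have hc2 : 1 - c ^ 2 < 0 := by nlinarith
    exact mul_neg_of_neg_of_pos (mul_neg_of_neg_of_pos hc2 hcy) hsy
  simpa using hanti ⟨le_rfl, by positivity⟩ ⟨hx₀.le, hx⟩ hx₀

lemma sinRatio_nonneg {c x : ℝ} (hc : 1 < c) (hx₀ : 0 < x) (hx : x ≤ π / c) :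
    0 ≤ sinRatio c x := by
  have hc₀ : 0 < c := one_pos.trans hc
  have hcx : 0 ≤ sin (c * x) :=
    sin_nonneg_of_nonneg_of_le_pi (by positivity) ((le_div_iff₀' hc₀).1 hx)
  exact div_nonneg hcx (mul_nonneg hc₀.le (sin_pos_of_pos_of_le_pi_div hc hx₀ hx).le)

lemma strictAntiOn_sinRatio {c : ℝ} (hc : 1 < c) :
    StrictAntiOn (sinRatio c) (Ioc 0 (π / c)) := by
  have hc₀ : 0 < c := one_pos.trans hc
  have hden {x : ℝ} (hx : x ∈ Ioc 0 (π / c)) : 0 < c * sin x :=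
    mul_pos hc₀ (sin_pos_of_pos_of_le_pi_div hc hx.1 hx.2)
  refine strictAntiOn_of_deriv_neg (convex_Ioc _ _)
    (ContinuousOn.div (by fun_prop) (by fun_prop) fun x hx => (hden hx).ne') fun x hx => ?_
  rw [interior_Ioc] at hx
  have hx' : x ∈ Ioc 0 (π / c) := Ioo_subset_Ioc_self hx
  have hderiv : HasDerivAt (sinRatio c) _ x :=
    ((hasDerivAt_id x).const_mul c).sin.div ((hasDerivAt_sin x).const_mul c) (hden hx').ne'
  rw [hderiv.deriv]
  refine div_neg_of_neg_of_pos ?_ (pow_pos (hden hx') 2)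
  have hN := mul_cos_mul_mul_sin_sub_cos_mul_sin_mul_neg hc hx.1 hx.2.le
  calc _ = c * (c * cos (c * x) * sin x - cos x * sin (c * x)) := by simp only [id]; ring
    _ < 0 := mul_neg_of_pos_of_neg hc₀ hN

lemma strictMonoOn_sinRatio_pi_div_sq {c : ℝ} (hc : 1 < c) :
    StrictMonoOn (fun d => sinRatio c (π / d) ^ 2) (Ici c) := by
  have hmem {d : ℝ} (hd : c ≤ d) : π / d ∈ Ioc 0 (π / c) :=
    ⟨div_pos pi_pos (by linarith), div_le_div_of_nonneg_left pi_pos.le (by linarith) hd⟩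
  intro d₁ hd₁ d₂ hd₂ hd
  have hlt : π / d₂ < π / d₁ :=
    div_lt_div_of_pos_left pi_pos (by linarith [mem_Ici.1 hd₁]) hd
  exact pow_lt_pow_left₀ (strictAntiOn_sinRatio hc (hmem hd₂) (hmem hd₁) hlt)
    (sinRatio_nonneg hc (hmem hd₁).1 (hmem hd₁).2) two_ne_zero

lemma tendsto_sinRatio_pi_div_atTop {c : ℝ} (hc : c ≠ 0) :
    Tendsto (fun d => sinRatio c (π / d)) atTop (𝓝 1) := by
  refine (tendsto_sinRatio_nhdsNE_zero hc).comp (tendsto_nhdsWithin_iff.2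
    ⟨tendsto_const_nhds.div_atTop tendsto_id, ?_⟩)
  filter_upwards [eventually_gt_atTop 0] with d hd
  exact (div_pos pi_pos hd).ne'

end Real

/-- for fixed integer `k ≥ 2`, the adjacent-frequency correlation magnitude
`d ↦ sin²(πk/d)/(k² sin²(π/d))` is strictly increasing on real `d ≥ 2k` and tends to `1`
as `d → ∞`. -/
theorem adjacent_corr_strictMono_and_tendsto_one (k : ℕ) (hk : 2 ≤ k) :
    StrictMonoOn
        (fun d : ℝ => Real.sin (Real.pi * k / d) ^ 2 /
          ((k : ℝ) ^ 2 * Real.sin (Real.pi / d) ^ 2))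
        (Set.Ici ((2 * k : ℕ) : ℝ)) ∧
      Tendsto
        (fun d : ℝ => Real.sin (Real.pi * k / d) ^ 2 /
          ((k : ℝ) ^ 2 * Real.sin (Real.pi / d) ^ 2))
        atTop (nhds 1) := by
  have hk' : (1 : ℝ) < k := by exact_mod_cast hk
  have hf : (fun d : ℝ => sin (π * k / d) ^ 2 / ((k : ℝ) ^ 2 * sin (π / d) ^ 2)) =
      fun d => sinRatio k (π / d) ^ 2 := by
    ext d
    rw [sinRatio, div_pow, mul_pow, mul_div_assoc', mul_comm (k : ℝ) π]
  rw [hf]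
  refine ⟨(strictMonoOn_sinRatio_pi_div_sq hk').mono (Ici_subset_Ici.2 ?_), ?_⟩
  · push_cast
    linarith
  · simpa using (tendsto_sinRatio_pi_div_atTop (by linarith)).pow 2
end
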